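/- Every 4-regular graph of girth at least 7 has Grundy number 5. -/

import Mathlib

variable {V : Type*}

/-- `c` is a Grundy coloring of `G`: a proper coloring with positive integer
colors in which every vertex of color `i` has, for each `1 ≤ j < i`, a neighbor
of color `j`. -/
def IsGrundyColoring (G : SimpleGraph V) (c : V → ℕ) : Prop :=
  (∀ v, 1 ≤ c v) ∧
  (∀ v w, G.Adj v w → c v ≠ c w) ∧
  (∀ v j, 1 ≤ j → j < c v → ∃ u, G.Adj v u ∧ c u = j)

/-- `c` is a Grundy `k`-coloring of `G`: a Grundy coloring using exactly the
colors `1, …, k` (surjectively). -/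
def IsGrundyKColoring (G : SimpleGraph V) (c : V → ℕ) (k : ℕ) : Prop :=
  IsGrundyColoring G c ∧ (∀ v, c v ≤ k) ∧ (∀ j, 1 ≤ j → j ≤ k → ∃ v, c v = j)

/-- `G` admits a Grundy `k`-coloring. -/
def GrundyColorable (G : SimpleGraph V) (k : ℕ) : Prop :=
  ∃ c : V → ℕ, IsGrundyKColoring G c k

/-- The Grundy number of `G`: the largest `k` such that `G` admits a Grundy
`k`-coloring. -/
noncomputable def grundy (G : SimpleGraph V) : ℕ :=
  sSup {k | GrundyColorable G k}

/-- `X` is an independent module of `G`: an independent set of vertices all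
having the same neighborhood. -/
def IndepModule (G : SimpleGraph V) (X : Set V) : Prop :=
  (∀ x ∈ X, ∀ y ∈ X, ¬ G.Adj x y) ∧
  (∀ x ∈ X, ∀ y ∈ X, ∀ z, G.Adj x z ↔ G.Adj y z)

/-- The neighborhood of `v` in `G` can be partitioned into `n` independent
modules of `G`. -/
def NbhdPartition (G : SimpleGraph V) (v : V) (n : ℕ) : Prop :=
  ∃ M : Fin n → Set V, (∀ i, IndepModule G (M i)) ∧
    (∀ i j, i ≠ j → Disjoint (M i) (M j)) ∧
    (⋃ i, M i) = G.neighborSet v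

/-- `G` contains an induced 4-cycle. -/
def HasInducedC4 (G : SimpleGraph V) : Prop :=
  ∃ a b c d : V, a ≠ b ∧ a ≠ c ∧ a ≠ d ∧ b ≠ c ∧ b ≠ d ∧ c ≠ d ∧
    G.Adj a b ∧ G.Adj b c ∧ G.Adj c d ∧ G.Adj d a ∧ ¬ G.Adj a c ∧ ¬ G.Adj b d

/-- `G` admits a partial Grundy `k`-coloring: a surjective proper coloring with
colors `1, …, k` such that every color class `j` contains a vertex having, for
each `1 ≤ i < j`, a neighbor of color `i`. -/
def PartialGrundyColorable (G : SimpleGraph V) (k : ℕ) : Prop :=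
  ∃ c : V → ℕ, (∀ v, 1 ≤ c v ∧ c v ≤ k) ∧
    (∀ v w, G.Adj v w → c v ≠ c w) ∧
    (∀ j, 1 ≤ j → j ≤ k →
      ∃ v, c v = j ∧ ∀ i, 1 ≤ i → i < j → ∃ u, G.Adj v u ∧ c u = i)

/-- The partial Grundy number of `G`. -/
noncomputable def partialGrundy (G : SimpleGraph V) : ℕ :=
  sSup {k | PartialGrundyColorable G k}

/-!
Upper bound: a vertex of colour `k` in a Grundy colouring sees the `k - 1` smaller colours among
its neighbours, so `Γ(G) ≤ Δ(G) + 1 = 5`.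

Lower bound: around any vertex `r` we embed the binomial tree of order 5 (`r` has children of
colours `1, 2, 3, 4`, and a child of colour `i` is itself the root of the tree of order `i`) so
that equally coloured tree vertices are non-adjacent. In girth `≥ 7` a non-backtracking walk of
length `< 7` is a path, so two tree vertices at tree distance `2, …, 5` are non-adjacent; the five
equally coloured pairs at larger tree distance are separated by choosing four of the leaves
carefully, which is possible because two distinct vertices share at most one neighbour. This
partial Grundy colouring extends to a Grundy colouring of `G`: among the proper colourings
extending it, one of minimal colour sum is Grundy, since otherwise some colour could be lowered.
-/

open Finset

namespace SimpleGraph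

variable {G : SimpleGraph V}

theorem Walk.isPath_of_isChain_of_length_lt_egirth {u v : V} (p : G.Walk u v)
    (hlen : p.length < G.egirth) (hp : p.edges.IsChain (· ≠ ·)) : p.IsPath := by
  classical
  induction p with
  | nil => simp
  | @cons a b w hab q ih =>
    rw [edges_cons, List.isChain_cons] at hp
    rw [length_cons, Nat.cast_add, Nat.cast_one] at hlen
    have hq : q.IsPath := ih (lt_of_le_of_lt le_self_add hlen) hp.2
    refine (cons_isPath_iff hab q).mpr ⟨hq, fun ha => ?_⟩
    have hqn : ¬ q.Nil := fun hn => hab.ne (by simpa [nil_iff_support_eq.mp hn] using ha)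
    -- `a` reappearing on `q` closes a cycle of length at most `p.length`
    have hcycle : (cons hab (q.takeUntil a ha)).IsCycle := by
      refine (cons_isCycle_iff _ hab).mpr ⟨hq.takeUntil ha, fun he => ?_⟩
      have hsnd : a = q.snd := hq.eq_snd_of_mem_edges
        (Sym2.eq_swap ▸ q.edges_takeUntil_subset_edges ha he)
      apply hp.1 s(b, q.snd)
      · rw [← q.cons_tail_eq hqn]; simp
      · rw [← hsnd, Sym2.eq_swap]
    have hle := G.egirth_le_length hcycle
    rw [length_cons] at hle
    have := q.length_takeUntil_le_length ha
    exact absurd (hle.trans (by norm_cast; omega)) (not_le.mpr hlen)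

theorem Walk.ne_of_isChain_of_length_lt_egirth {u v : V} (p : G.Walk u v) (hpos : p.length ≠ 0)
    (hlen : p.length < G.egirth) (hp : p.edges.IsChain (· ≠ ·)) : u ≠ v := by
  rintro rfl
  exact hpos (length_eq_zero_iff.mpr
    (isPath_iff_nil.mp (p.isPath_of_isChain_of_length_lt_egirth hlen hp)))

theorem Walk.not_adj_of_isChain_of_length_lt_egirth {u v : V} (p : G.Walk u v)
    (h2 : 2 ≤ p.length) (hlen : p.length + 1 < G.egirth) (hp : p.edges.IsChain (· ≠ ·)) :
    ¬ G.Adj u v := by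
  intro huv
  have hpath := p.isPath_of_isChain_of_length_lt_egirth (lt_of_le_of_lt le_self_add hlen) hp
  have hcycle : (cons huv.symm p).IsCycle := by
    refine (cons_isCycle_iff p huv.symm).mpr ⟨hpath, fun he => ?_⟩
    have hsnd : v = p.snd := hpath.eq_snd_of_mem_edges (Sym2.eq_swap ▸ he)
    have := hpath.getVert_injOn (by simp; omega : 1 ∈ {i | i ≤ p.length})
      (by simp : p.length ∈ {i | i ≤ p.length}) (by rw [getVert_length]; exact hsnd.symm)
    omega
  exact absurd (G.egirth_le_length hcycle) (by simpa using hlen)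

variable {a b c d e f g : V}

theorem not_adj_of_walk₃ (hG : 4 < G.egirth) (hab : G.Adj a b) (hbc : G.Adj b c)
    (hcd : G.Adj c d) (hac : a ≠ c) (hbd : b ≠ d) : ¬ G.Adj a d :=
  Walk.not_adj_of_isChain_of_length_lt_egirth (.cons hab (.cons hbc (.cons hcd .nil)))
    (by simp) (by norm_num; exact hG) (by simp [hab.ne, hbc.ne, hac, hbd])

theorem not_adj_of_walk₄ (hG : 5 < G.egirth) (hab : G.Adj a b) (hbc : G.Adj b c)
    (hcd : G.Adj c d) (hde : G.Adj d e) (hac : a ≠ c) (hbd : b ≠ d) (hce : c ≠ e) :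
    ¬ G.Adj a e :=
  Walk.not_adj_of_isChain_of_length_lt_egirth (.cons hab (.cons hbc (.cons hcd (.cons hde .nil))))
    (by simp) (by norm_num; exact hG) (by simp [hab.ne, hbc.ne, hcd.ne, hac, hbd, hce])

theorem not_adj_of_walk₅ (hG : 6 < G.egirth) (hab : G.Adj a b) (hbc : G.Adj b c)
    (hcd : G.Adj c d) (hde : G.Adj d e) (hef : G.Adj e f)
    (hac : a ≠ c) (hbd : b ≠ d) (hce : c ≠ e) (hdf : d ≠ f) : ¬ G.Adj a f :=
  Walk.not_adj_of_isChain_of_length_lt_egirth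
    (.cons hab (.cons hbc (.cons hcd (.cons hde (.cons hef .nil))))) (by simp)
    (by norm_num; exact hG) (by simp [hab.ne, hbc.ne, hcd.ne, hde.ne, hac, hbd, hce, hdf])

theorem ne_of_walk₅ (hG : 5 < G.egirth) (hab : G.Adj a b) (hbc : G.Adj b c)
    (hcd : G.Adj c d) (hde : G.Adj d e) (hef : G.Adj e f)
    (hac : a ≠ c) (hbd : b ≠ d) (hce : c ≠ e) (hdf : d ≠ f) : a ≠ f :=
  Walk.ne_of_isChain_of_length_lt_egirth
    (.cons hab (.cons hbc (.cons hcd (.cons hde (.cons hef .nil))))) (by simp) (by simpa using hG)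
    (by simp [hab.ne, hbc.ne, hcd.ne, hde.ne, hac, hbd, hce, hdf])

theorem ne_of_walk₆ (hG : 6 < G.egirth) (hab : G.Adj a b) (hbc : G.Adj b c)
    (hcd : G.Adj c d) (hde : G.Adj d e) (hef : G.Adj e f) (hfg : G.Adj f g)
    (hac : a ≠ c) (hbd : b ≠ d) (hce : c ≠ e) (hdf : d ≠ f) (heg : e ≠ g) : a ≠ g :=
  Walk.ne_of_isChain_of_length_lt_egirth
    (.cons hab (.cons hbc (.cons hcd (.cons hde (.cons hef (.cons hfg .nil)))))) (by simp)
    (by simpa using hG)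
    (by simp [hab.ne, hbc.ne, hcd.ne, hde.ne, hef.ne, hac, hbd, hce, hdf, heg])

theorem card_neighborFinset_inter_le_one [G.LocallyFinite] [DecidableEq V] (hG : 4 < G.egirth)
    (hab : a ≠ b) : #(G.neighborFinset a ∩ G.neighborFinset b) ≤ 1 := by
  refine card_le_one.mpr fun x hx y hy => ?_
  simp only [mem_inter, mem_neighborFinset] at hx hy
  by_contra hxy
  exact not_adj_of_walk₃ hG hx.1.symm hy.1 hy.2.symm hxy hab hx.2.symm

theorem exists_adj_notMem_forall_not_adj [G.LocallyFinite] [DecidableEq V] (hG : 4 < G.egirth)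
    (E W : Finset V) (haW : a ∉ W) (hcard : #E + #W < G.degree a) :
    ∃ x, G.Adj a x ∧ x ∉ E ∧ ∀ w ∈ W, ¬ G.Adj x w := by
  let B := E ∪ W.biUnion fun w => G.neighborFinset a ∩ G.neighborFinset w
  have hcommon : #(W.biUnion fun w => G.neighborFinset a ∩ G.neighborFinset w) ≤ #W :=
    card_biUnion_le.trans ((sum_le_card_nsmul _ _ 1 fun w hw =>
      card_neighborFinset_inter_le_one hG (by rintro rfl; exact haW hw)).trans (by simp))
  have hB : #B < #(G.neighborFinset a) := by
    rw [card_neighborFinset_eq_degree]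
    exact (card_union_le _ _).trans_lt (by omega)
  obtain ⟨x, hx, hxB⟩ := exists_mem_notMem_of_card_lt_card hB
  rw [mem_neighborFinset] at hx
  refine ⟨x, hx, fun hxE => hxB (mem_union_left _ hxE), fun w hw hxw => hxB ?_⟩
  exact mem_union_right _ (mem_biUnion.mpr ⟨w, hw, by simp [hx, hxw.symm]⟩)

end SimpleGraph

section Grundy

open SimpleGraph

variable {G : SimpleGraph V}

/-- `c₀ v = 0` means that `v` is uncoloured. -/
def IsGrundyPrecoloring (G : SimpleGraph V) (c₀ : V → ℕ) : Prop :=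
  (∀ v w, G.Adj v w → c₀ v ≠ 0 → c₀ v ≠ c₀ w) ∧
  (∀ v j, 1 ≤ j → j < c₀ v → ∃ u, G.Adj v u ∧ c₀ u = j)

theorem IsGrundyPrecoloring.exists_isGrundyColoring [Fintype V] {c₀ : V → ℕ}
    (h : IsGrundyPrecoloring G c₀) :
    ∃ c, IsGrundyColoring G c ∧ ∀ v, c₀ v ≠ 0 → c v = c₀ v := by
  classical
  let A : Set (V → ℕ) := {c | (∀ v, 1 ≤ c v) ∧ (∀ v w, G.Adj v w → c v ≠ c w) ∧
    ∀ v, c₀ v ≠ 0 → c v = c₀ v}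
  have hA : A.Nonempty := by
    let M := univ.sup c₀ + 1
    have hM : ∀ v, c₀ v < M := fun v => Nat.lt_succ_of_le (le_sup (mem_univ v))
    refine ⟨fun v => if c₀ v = 0 then M + Fintype.equivFin V v else c₀ v, ?_, ?_, ?_⟩
    · intro v; dsimp only; split_ifs <;> omega
    · intro v w hvw
      have hne : (Fintype.equivFin V v : ℕ) ≠ Fintype.equivFin V w := by
        simpa [Fin.val_inj] using hvw.ne
      have := hM v; have := hM w
      dsimp only; split_ifs <;> first | omega | exact h.1 v w hvw ‹_›
    · intro v hv; simp [hv]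
  obtain ⟨c, ⟨hpos, hproper, hext⟩, hmin⟩ :=
    (measure fun c : V → ℕ => ∑ v, c v).wf.has_min A hA
  refine ⟨c, ⟨hpos, hproper, fun v j hj hjv => ?_⟩, hext⟩
  by_cases hv : c₀ v = 0
  · -- otherwise recolouring `v` with `j` stays admissible and lowers the colour sum
    by_contra! hno
    refine hmin (Function.update c v j) ⟨fun w => ?_, fun w w' hww' => ?_, fun w hw => ?_⟩ ?_
    · rcases eq_or_ne w v with rfl | hw <;> simp [*]
    · rcases eq_or_ne w v with rfl | hw
      · simpa [hww'.ne'] using (hno w' hww').symm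
      rcases eq_or_ne w' v with rfl | hw'
      · simpa [hw] using hno w hww'.symm
      simpa [hw, hw'] using hproper w w' hww'
    · rw [Function.update_of_ne (by rintro rfl; exact hw hv), hext w hw]
    · show ∑ w, Function.update c v j w < ∑ w, c w
      refine sum_lt_sum (fun w _ => ?_) ⟨v, mem_univ v, by simpa using hjv⟩
      rcases eq_or_ne w v with rfl | hw <;> simp [*, hjv.le]
  · obtain ⟨u, hu, hcu⟩ := h.2 v j hj (hext v hv ▸ hjv)
    exact ⟨u, hu, by rw [hext u (by omega), hcu]⟩

theorem exists_isGrundyPrecoloring_of_layers (S : ℕ → Set V)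
    (hind : ∀ j, G.IsIndepSet (S j))
    (hnbr : ∀ j, ∀ v ∈ S j, ∀ i < j, ∃ u ∈ S i, G.Adj v u) :
    ∃ c₀, IsGrundyPrecoloring G c₀ ∧ ∀ j, ∀ v ∈ S j, c₀ v = j + 1 := by
  classical
  have hlt : ∀ {i j v}, v ∈ S i → v ∈ S j → ¬ i < j := fun hi hj hij => by
    obtain ⟨u, hu, hvu⟩ := hnbr _ _ hj _ hij
    exact hind _ hi hu hvu.ne hvu
  have hunique : ∀ {i j v}, v ∈ S i → v ∈ S j → i = j := fun hi hj =>
    le_antisymm (not_lt.mp (hlt hj hi)) (not_lt.mp (hlt hi hj))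
  let c₀ : V → ℕ := fun v => if h : ∃ j, v ∈ S j then Nat.find h + 1 else 0
  have hc₀ : ∀ j, ∀ v ∈ S j, c₀ v = j + 1 := fun j v hv => by
    have h : ∃ j, v ∈ S j := ⟨j, hv⟩
    simp only [c₀, dif_pos h, hunique (Nat.find_spec h) hv]
  have hc₀_ne : ∀ v, c₀ v ≠ 0 → ∃ j, v ∈ S j := fun v hv => by
    by_contra h; simp [c₀, h] at hv
  refine ⟨c₀, ⟨fun v w hvw hv hvw' => ?_, fun v i hi hiv => ?_⟩, hc₀⟩
  · obtain ⟨j, hj⟩ := hc₀_ne v hv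
    obtain ⟨j', hj'⟩ := hc₀_ne w (hvw' ▸ hv)
    have : j = j' := by have := hc₀ j v hj; have := hc₀ j' w hj'; omega
    subst this
    exact hind j hj hj' hvw.ne hvw
  · obtain ⟨j, hj⟩ := hc₀_ne v (by omega)
    rw [hc₀ j v hj] at hiv
    obtain ⟨u, hu, hvu⟩ := hnbr j v hj (i - 1) (by omega)
    exact ⟨u, hvu, by rw [hc₀ _ u hu]; omega⟩

theorem IsGrundyColoring.le_degree_add_one [G.LocallyFinite] {c : V → ℕ}
    (hc : IsGrundyColoring G c) (v : V) : c v ≤ G.degree v + 1 := by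
  classical
  have hsub : Icc 1 (c v - 1) ⊆ (G.neighborFinset v).image c := fun j hj => by
    rw [mem_Icc] at hj
    obtain ⟨u, hvu, hu⟩ := hc.2.2 v j hj.1 (by omega)
    exact mem_image.mpr ⟨u, (G.mem_neighborFinset v u).mpr hvu, hu⟩
  have := (card_le_card hsub).trans card_image_le
  rw [Nat.card_Icc, card_neighborFinset_eq_degree] at this
  omega

theorem GrundyColorable.le_add_one_of_forall_degree_le [G.LocallyFinite] {d k : ℕ}
    (hdeg : ∀ v, G.degree v ≤ d) (h : GrundyColorable G k) : k ≤ d + 1 := by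
  obtain ⟨c, hc, -, hsurj⟩ := h
  rcases Nat.eq_zero_or_pos k with rfl | hk
  · omega
  obtain ⟨v, rfl⟩ := hsurj k hk le_rfl
  exact (hc.le_degree_add_one v).trans (by have := hdeg v; omega)

theorem IsGrundyColoring.isGrundyKColoring {c : V → ℕ} {k : ℕ} {r : V}
    (hc : IsGrundyColoring G c) (hle : ∀ v, c v ≤ k) (hr : c r = k) :
    IsGrundyKColoring G c k := by
  refine ⟨hc, hle, fun j hj hjk => ?_⟩
  rcases hjk.lt_or_eq with hjk | rfl
  · obtain ⟨u, -, hu⟩ := hc.2.2 r j hj (hr ▸ hjk)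
    exact ⟨u, hu⟩
  · exact ⟨r, hr⟩

/-- The subscript of a vertex is its colour:
```
r ─┬─ n₁
   ├─ n₂ ─── f₁
   ├─ n₃ ─┬─ a₁
   │      └─ a₂ ─── b₁
   └─ n₄ ─┬─ c₁
          ├─ c₂ ─── d₁
          └─ c₃ ─┬─ e₁
                 └─ e₂ ─── l₁
```
-/
theorem exists_binomialTree_five [G.LocallyFinite] (hG : 7 ≤ G.egirth)
    (hdeg : ∀ v, 4 ≤ G.degree v) (r : V) :
    ∃ n₁ n₂ n₃ n₄ f₁ a₁ a₂ b₁ c₁ c₂ c₃ d₁ e₁ e₂ l₁ : V,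
      (G.Adj r n₁ ∧ G.Adj r n₂ ∧ G.Adj r n₃ ∧ G.Adj r n₄ ∧ G.Adj n₂ f₁ ∧ G.Adj n₃ a₁ ∧
        G.Adj n₃ a₂ ∧ G.Adj a₂ b₁ ∧ G.Adj n₄ c₁ ∧ G.Adj n₄ c₂ ∧ G.Adj n₄ c₃ ∧ G.Adj c₂ d₁ ∧
        G.Adj c₃ e₁ ∧ G.Adj c₃ e₂ ∧ G.Adj e₂ l₁) ∧
      G.IsIndepSet {n₁, f₁, a₁, b₁, c₁, d₁, e₁, l₁} ∧ G.IsIndepSet {n₂, a₂, c₂, e₂} ∧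
      G.IsIndepSet {n₃, c₃} := by
  classical
  have hG4 : 4 < G.egirth := lt_of_lt_of_le (by norm_num) hG
  have hG5 : 5 < G.egirth := lt_of_lt_of_le (by norm_num) hG
  have hG6 : 6 < G.egirth := lt_of_lt_of_le (by norm_num) hG
  have pick : ∀ a (E W : Finset V), a ∉ W → #E + #W ≤ 3 →
      ∃ x, G.Adj a x ∧ x ∉ E ∧ ∀ w ∈ W, ¬ G.Adj x w := fun a E W haW h =>
    exists_adj_notMem_forall_not_adj hG4 E W haW (h.trans_lt (hdeg a))
  obtain ⟨n₄, hn₄, -, -⟩ := pick r ∅ ∅ (by simp) (by simp)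
  obtain ⟨n₃, hn₃, hn₃', -⟩ := pick r {n₄} ∅ (by simp) (by simp)
  obtain ⟨n₂, hn₂, hn₂', -⟩ := pick r {n₄, n₃} ∅ (by simp) (by grw [card_le_two]; simp)
  obtain ⟨n₁, hn₁, hn₁', -⟩ := pick r {n₄, n₃, n₂} ∅ (by simp) (by grw [card_le_three]; simp)
  obtain ⟨c₃, hc₃, hc₃', -⟩ := pick n₄ {r} ∅ (by simp) (by simp)
  obtain ⟨c₂, hc₂, hc₂', -⟩ := pick n₄ {r, c₃} ∅ (by simp) (by grw [card_le_two]; simp)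
  obtain ⟨c₁, hc₁, hc₁', -⟩ := pick n₄ {r, c₃, c₂} ∅ (by simp) (by grw [card_le_three]; simp)
  obtain ⟨e₂, he₂, he₂', -⟩ := pick c₃ {n₄} ∅ (by simp) (by simp)
  obtain ⟨e₁, he₁, he₁', -⟩ := pick c₃ {n₄, e₂} ∅ (by simp) (by grw [card_le_two]; simp)
  obtain ⟨d₁, hd₁, hd₁', -⟩ := pick c₂ {n₄} ∅ (by simp) (by simp)
  obtain ⟨a₂, ha₂, ha₂', -⟩ := pick n₃ {r} ∅ (by simp) (by simp)
  simp only [mem_insert, mem_singleton, not_or] at hn₃' hn₂' hn₁' hc₃' hc₂' hc₁' he₂' he₁' hd₁' ha₂'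
  -- the leaves `b₁`, `l₁`, `a₁`, `f₁` avoid the equally coloured vertices at tree distance `≥ 6`
  have ha₂d₁ : a₂ ≠ d₁ :=
    ne_of_walk₅ hG5 ha₂.symm hn₃.symm hn₄ hc₂ hd₁ ha₂' hn₃' (Ne.symm hc₂'.1) (Ne.symm hd₁')
  have ha₂e₁ : a₂ ≠ e₁ :=
    ne_of_walk₅ hG5 ha₂.symm hn₃.symm hn₄ hc₃ he₁ ha₂' hn₃' (Ne.symm hc₃') (Ne.symm he₁'.1)
  obtain ⟨b₁, hb₁, hb₁', hb₁W⟩ := pick a₂ {n₃} {d₁, e₁} (by simp [ha₂d₁, ha₂e₁])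
    (by grw [card_le_two]; simp)
  simp only [mem_insert, mem_singleton, forall_eq_or_imp, forall_eq] at hb₁' hb₁W
  have he₂b₁ : e₂ ≠ b₁ := ne_of_walk₆ hG6 he₂.symm hc₃.symm hn₄.symm hn₃ ha₂ hb₁
    he₂' hc₃' (Ne.symm hn₃') (Ne.symm ha₂') (Ne.symm hb₁')
  obtain ⟨l₁, hl₁, hl₁', hl₁W⟩ := pick e₂ {c₃} {b₁} (by simp [he₂b₁]) (by simp)
  simp only [mem_singleton, forall_eq] at hl₁' hl₁W
  have hn₃l₁ : n₃ ≠ l₁ :=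
    ne_of_walk₅ hG5 hn₃.symm hn₄ hc₃ he₂ hl₁ hn₃' (Ne.symm hc₃') (Ne.symm he₂') (Ne.symm hl₁')
  have hn₂l₁ : n₂ ≠ l₁ :=
    ne_of_walk₅ hG5 hn₂.symm hn₄ hc₃ he₂ hl₁ hn₂'.1 (Ne.symm hc₃') (Ne.symm he₂') (Ne.symm hl₁')
  obtain ⟨a₁, ha₁, ha₁', ha₁W⟩ := pick n₃ {r, a₂} {l₁} (by simp [hn₃l₁])
    (by grw [card_le_two]; simp)
  obtain ⟨f₁, hf₁, hf₁', hf₁W⟩ := pick n₂ {r} {l₁} (by simp [hn₂l₁]) (by simp)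
  simp only [mem_insert, mem_singleton, not_or, forall_eq] at ha₁' ha₁W hf₁' hf₁W
  -- the other equally coloured pairs are joined by a tree walk of length at most 5
  have n₃c₃ := not_adj_of_walk₃ hG4 hn₃.symm hn₄ hc₃ hn₃' (Ne.symm hc₃')
  have n₂a₂ := not_adj_of_walk₃ hG4 hn₂.symm hn₃ ha₂ hn₂'.2 (Ne.symm ha₂')
  have n₂c₂ := not_adj_of_walk₃ hG4 hn₂.symm hn₄ hc₂ hn₂'.1 (Ne.symm hc₂'.1)
  have n₂e₂ := not_adj_of_walk₄ hG5 hn₂.symm hn₄ hc₃ he₂ hn₂'.1 (Ne.symm hc₃') (Ne.symm he₂')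
  have a₂c₂ := not_adj_of_walk₄ hG5 ha₂.symm hn₃.symm hn₄ hc₂ ha₂' hn₃' (Ne.symm hc₂'.1)
  have a₂e₂ := not_adj_of_walk₅ hG6 ha₂.symm hn₃.symm hn₄ hc₃ he₂ ha₂' hn₃' (Ne.symm hc₃')
    (Ne.symm he₂')
  have c₂e₂ := not_adj_of_walk₃ hG4 hc₂.symm hc₃ he₂ hc₂'.2 (Ne.symm he₂')
  have n₁f₁ := not_adj_of_walk₃ hG4 hn₁.symm hn₂ hf₁ hn₁'.2.2 (Ne.symm hf₁')
  have n₁a₁ := not_adj_of_walk₃ hG4 hn₁.symm hn₃ ha₁ hn₁'.2.1 (Ne.symm ha₁'.1)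
  have n₁b₁ := not_adj_of_walk₄ hG5 hn₁.symm hn₃ ha₂ hb₁ hn₁'.2.1 (Ne.symm ha₂') (Ne.symm hb₁')
  have n₁c₁ := not_adj_of_walk₃ hG4 hn₁.symm hn₄ hc₁ hn₁'.1 (Ne.symm hc₁'.1)
  have n₁d₁ := not_adj_of_walk₄ hG5 hn₁.symm hn₄ hc₂ hd₁ hn₁'.1 (Ne.symm hc₂'.1) (Ne.symm hd₁')
  have n₁e₁ := not_adj_of_walk₄ hG5 hn₁.symm hn₄ hc₃ he₁ hn₁'.1 (Ne.symm hc₃') (Ne.symm he₁'.1)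
  have n₁l₁ := not_adj_of_walk₅ hG6 hn₁.symm hn₄ hc₃ he₂ hl₁ hn₁'.1 (Ne.symm hc₃')
    (Ne.symm he₂') (Ne.symm hl₁')
  have f₁a₁ := not_adj_of_walk₄ hG5 hf₁.symm hn₂.symm hn₃ ha₁ hf₁' hn₂'.2 (Ne.symm ha₁'.1)
  have f₁b₁ := not_adj_of_walk₅ hG6 hf₁.symm hn₂.symm hn₃ ha₂ hb₁ hf₁' hn₂'.2 (Ne.symm ha₂')
    (Ne.symm hb₁')
  have f₁c₁ := not_adj_of_walk₄ hG5 hf₁.symm hn₂.symm hn₄ hc₁ hf₁' hn₂'.1 (Ne.symm hc₁'.1)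
  have f₁d₁ := not_adj_of_walk₅ hG6 hf₁.symm hn₂.symm hn₄ hc₂ hd₁ hf₁' hn₂'.1 (Ne.symm hc₂'.1)
    (Ne.symm hd₁')
  have f₁e₁ := not_adj_of_walk₅ hG6 hf₁.symm hn₂.symm hn₄ hc₃ he₁ hf₁' hn₂'.1 (Ne.symm hc₃')
    (Ne.symm he₁'.1)
  have a₁b₁ := not_adj_of_walk₃ hG4 ha₁.symm ha₂ hb₁ ha₁'.2 (Ne.symm hb₁')
  have a₁c₁ := not_adj_of_walk₄ hG5 ha₁.symm hn₃.symm hn₄ hc₁ ha₁'.1 hn₃' (Ne.symm hc₁'.1)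
  have a₁d₁ := not_adj_of_walk₅ hG6 ha₁.symm hn₃.symm hn₄ hc₂ hd₁ ha₁'.1 hn₃' (Ne.symm hc₂'.1)
    (Ne.symm hd₁')
  have a₁e₁ := not_adj_of_walk₅ hG6 ha₁.symm hn₃.symm hn₄ hc₃ he₁ ha₁'.1 hn₃' (Ne.symm hc₃')
    (Ne.symm he₁'.1)
  have b₁c₁ := not_adj_of_walk₅ hG6 hb₁.symm ha₂.symm hn₃.symm hn₄ hc₁ hb₁' ha₂' hn₃'
    (Ne.symm hc₁'.1)
  have c₁d₁ := not_adj_of_walk₃ hG4 hc₁.symm hc₂ hd₁ hc₁'.2.2 (Ne.symm hd₁')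
  have c₁e₁ := not_adj_of_walk₃ hG4 hc₁.symm hc₃ he₁ hc₁'.2.1 (Ne.symm he₁'.1)
  have c₁l₁ := not_adj_of_walk₄ hG5 hc₁.symm hc₃ he₂ hl₁ hc₁'.2.1 (Ne.symm he₂') (Ne.symm hl₁')
  have d₁e₁ := not_adj_of_walk₄ hG5 hd₁.symm hc₂.symm hc₃ he₁ hd₁' hc₂'.2 (Ne.symm he₁'.1)
  have d₁l₁ := not_adj_of_walk₅ hG6 hd₁.symm hc₂.symm hc₃ he₂ hl₁ hd₁' hc₂'.2 (Ne.symm he₂')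
    (Ne.symm hl₁')
  have e₁l₁ := not_adj_of_walk₃ hG4 he₁.symm he₂ hl₁ he₁'.2 (Ne.symm hl₁')
  have b₁l₁ : ¬ G.Adj b₁ l₁ := fun h => hl₁W h.symm
  refine ⟨n₁, n₂, n₃, n₄, f₁, a₁, a₂, b₁, c₁, c₂, c₃, d₁, e₁, e₂, l₁,
    ⟨hn₁, hn₂, hn₃, hn₄, hf₁, ha₁, ha₂, hb₁, hc₁, hc₂, hc₃, hd₁, he₁, he₂, hl₁⟩, ?_, ?_, ?_⟩ <;>
    simp [← isClique_compl, isClique_insert, *]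

theorem exists_isGrundyPrecoloring_eq_five [G.LocallyFinite] (hG : 7 ≤ G.egirth)
    (hdeg : ∀ v, 4 ≤ G.degree v) (r : V) : ∃ c₀, IsGrundyPrecoloring G c₀ ∧ c₀ r = 5 := by
  obtain ⟨n₁, n₂, n₃, n₄, f₁, a₁, a₂, b₁, c₁, c₂, c₃, d₁, e₁, e₂, l₁,
    ⟨hn₁, hn₂, hn₃, hn₄, hf₁, ha₁, ha₂, hb₁, hc₁, hc₂, hc₃, hd₁, he₁, he₂, hl₁⟩, h₁, h₂, h₃⟩ :=
    exists_binomialTree_five hG hdeg r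
  let S : ℕ → Set V
    | 0 => {n₁, f₁, a₁, b₁, c₁, d₁, e₁, l₁}
    | 1 => {n₂, a₂, c₂, e₂}
    | 2 => {n₃, c₃}
    | 3 => {n₄}
    | 4 => {r}
    | _ => ∅
  have hind : ∀ j, G.IsIndepSet (S j) := by
    rintro (_ | _ | _ | _ | _ | j)
    exacts [h₁, h₂, h₃, Set.pairwise_singleton _ _, Set.pairwise_singleton _ _,
      Set.pairwise_empty _]
  have hnbr : ∀ j, ∀ v ∈ S j, ∀ i < j, ∃ u ∈ S i, G.Adj v u := by
    rintro (_ | _ | _ | _ | _ | j) v hv i hi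
    · omega
    · obtain rfl : i = 0 := by omega
      obtain rfl | rfl | rfl | rfl : v = n₂ ∨ v = a₂ ∨ v = c₂ ∨ v = e₂ := hv
      exacts [⟨f₁, by simp [S], hf₁⟩, ⟨b₁, by simp [S], hb₁⟩, ⟨d₁, by simp [S], hd₁⟩,
        ⟨l₁, by simp [S], hl₁⟩]
    · obtain rfl | rfl : v = n₃ ∨ v = c₃ := hv <;> interval_cases i
      exacts [⟨a₁, by simp [S], ha₁⟩, ⟨a₂, by simp [S], ha₂⟩, ⟨e₁, by simp [S], he₁⟩,
        ⟨e₂, by simp [S], he₂⟩]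
    · obtain rfl : v = n₄ := hv
      interval_cases i
      exacts [⟨c₁, by simp [S], hc₁⟩, ⟨c₂, by simp [S], hc₂⟩, ⟨c₃, by simp [S], hc₃⟩]
    · obtain rfl : v = r := hv
      interval_cases i
      exacts [⟨n₁, by simp [S], hn₁⟩, ⟨n₂, by simp [S], hn₂⟩, ⟨n₃, by simp [S], hn₃⟩,
        ⟨n₄, by simp [S], hn₄⟩]
    · exact hv.elim
  obtain ⟨c₀, hc₀, hc₀S⟩ := exists_isGrundyPrecoloring_of_layers S hind hnbr
  exact ⟨c₀, hc₀, hc₀S 4 r rfl⟩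

end Grundy

theorem fourRegular_girth_ge_seven_grundy {V : Type*} [Fintype V] [Nonempty V]
    (G : SimpleGraph V) [DecidableRel G.Adj]
    (hreg : G.IsRegularOfDegree 4) (hg : 7 ≤ G.girth) :
    grundy G = 5 := by
  obtain ⟨r⟩ := ‹Nonempty V›
  have hG : 7 ≤ G.egirth := (Nat.cast_le.mpr hg).trans G.egirth.natCast_toNat_le_self
  have hdeg : ∀ v, G.degree v ≤ 4 := fun v => (hreg v).le
  obtain ⟨c₀, hc₀, hr⟩ := exists_isGrundyPrecoloring_eq_five hG (fun v => (hreg v).ge) r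
  obtain ⟨c, hc, hext⟩ := hc₀.exists_isGrundyColoring
  have hcol : GrundyColorable G 5 :=
    ⟨c, hc.isGrundyKColoring (fun v => (hc.le_degree_add_one v).trans (Nat.succ_le_succ (hdeg v)))
      ((hext r (by omega)).trans hr)⟩
  exact IsGreatest.csSup_eq ⟨hcol, fun k hk => hk.le_add_one_of_forall_degree_le hdeg⟩
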